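/- arXiv:2605.22160 — 5 statements merged into one kernel-verified Lean document; each statement's English description precedes it below -/
import Mathlib

section
/- Let p ≥ 2 and let l_1, l_2 be nonnegative integers with l_1(p^3-p^2) ≥ 4 and l_2(p^4-p^2) ≥ 12. Then l_1(p^3-p-1)^3 + l_2(p^4-p^2-1)^3 < (l_1(p^3-p^2) + l_2(p^4-p^2) - 1)^3. -/
/-- For `p ≥ 2` and nonnegative integers `l₁, l₂` with `l₁(p³-p²) ≥ 4` and `l₂(p⁴-p²) ≥ 12`,
`l₁(p³-p-1)³ + l₂(p⁴-p²-1)³ < (l₁(p³-p²) + l₂(p⁴-p²) - 1)³`. -/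
theorem stmt8 (p l1 l2 : ℤ) (hp : 2 ≤ p) (hl1 : 0 ≤ l1) (hl2 : 0 ≤ l2)
    (h1 : 4 ≤ l1 * (p ^ 3 - p ^ 2)) (h2 : 12 ≤ l2 * (p ^ 4 - p ^ 2)) :
    l1 * (p ^ 3 - p - 1) ^ 3 + l2 * (p ^ 4 - p ^ 2 - 1) ^ 3 <
      (l1 * (p ^ 3 - p ^ 2) + l2 * (p ^ 4 - p ^ 2) - 1) ^ 3 := by
  have hl1' : 1 ≤ l1 := by
    rcases lt_or_ge l1 1 with h | h
    · exfalso
      have hl0 : l1 = 0 := by omega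
      rw [hl0] at h1; norm_num at h1
    · exact h
  have hl2' : 1 ≤ l2 := by
    rcases lt_or_ge l2 1 with h | h
    · exfalso
      have hl0 : l2 = 0 := by omega
      rw [hl0] at h2; norm_num at h2
    · exact h
  have ha : (0:ℤ) ≤ p ^ 3 - p - 1 := by nlinarith
  have hab : (p:ℤ) ^ 3 - p - 1 ≤ p ^ 4 - p ^ 2 - 1 := by nlinarith [sq_nonneg p, sq_nonneg (p-1)]
  set a : ℤ := p ^ 3 - p - 1 with ha_def
  set b : ℤ := p ^ 4 - p ^ 2 - 1 with hb_def
  set A : ℤ := l1 * (p ^ 3 - p ^ 2) with hA_def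
  set B : ℤ := l2 * (p ^ 4 - p ^ 2) with hB_def
  have hb : 0 ≤ b := le_trans ha hab
  -- l1 * a ≤ 2 * A
  have hA2 : l1 * a ≤ 2 * A := by
    have hkey : 0 ≤ p ^ 3 - 2 * p ^ 2 + p + 1 := by nlinarith [sq_nonneg (p - 1)]
    have h0 : 0 ≤ l1 * (p ^ 3 - 2 * p ^ 2 + p + 1) := mul_nonneg hl1 hkey
    have : 2 * A = l1 * a + l1 * (p ^ 3 - 2 * p ^ 2 + p + 1) := by
      rw [hA_def, ha_def]; ring
    linarith
  -- l2 * b ≤ B - 1 and b ≤ B - 1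
  have hlb : l2 * b = B - l2 := by rw [hB_def, hb_def]; ring
  have hlb1 : l2 * b ≤ B - 1 := by omega
  have hbB : b ≤ B - 1 := by
    have h0 : b * 1 ≤ b * l2 := mul_le_mul_of_nonneg_left hl2' hb
    nlinarith
  -- step 1: sum of cubes ≤ (l1*a + l2*b) * b^2
  have step1 : l1 * a ^ 3 + l2 * b ^ 3 ≤ (l1 * a + l2 * b) * b ^ 2 := by
    have h3 : a ^ 3 ≤ a * b ^ 2 := by
      nlinarith [mul_nonneg (mul_nonneg ha (sub_nonneg.2 hab)) (add_nonneg hb ha)]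
    have h4 : l1 * a ^ 3 ≤ l1 * (a * b ^ 2) := mul_le_mul_of_nonneg_left h3 hl1
    nlinarith
  -- step 2
  have step2 : (l1 * a + l2 * b) * b ^ 2 ≤ (2 * A + B - 1) * (B - 1) ^ 2 := by
    have hsum : l1 * a + l2 * b ≤ 2 * A + B - 1 := by linarith
    have hsq : b ^ 2 ≤ (B - 1) ^ 2 := by nlinarith
    have hA4 : 4 ≤ A := h1
    have hB12 : 12 ≤ B := h2
    calc (l1 * a + l2 * b) * b ^ 2 ≤ (2 * A + B - 1) * b ^ 2 := by
          apply mul_le_mul_of_nonneg_right hsum (by positivity)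
      _ ≤ (2 * A + B - 1) * (B - 1) ^ 2 := by
          apply mul_le_mul_of_nonneg_left hsq (by linarith)
  -- step 3
  have step3 : (2 * A + B - 1) * (B - 1) ^ 2 < (A + B - 1) ^ 3 := by
    have hA4 : 4 ≤ A := h1
    have hB12 : 12 ≤ B := h2
    have hA0 : (0:ℤ) < A := by linarith
    have hC0 : (0:ℤ) < B - 1 := by linarith
    nlinarith [pow_pos hA0 3, mul_pos (mul_pos hA0 hA0) hC0,
      mul_pos hA0 (mul_pos hC0 hC0)]
  linarith
end

section
/- Let p, q ≥ 2 and l_1, l_2, l_3, l_4 be nonnegative integers with (p-1)l_1 + (q-1)l_2 ≥ 2, (p^2-1)l_3 ≥ 3 and (pq-1)l_4 ≥ 3. Then l_1(p-2)^3 + l_2(q-2)^3 + l_3(p^2-2)^3 + l_4(pq-2)^3 < ((p-1)l_1 + (q-1)l_2 + (p^2-1)l_3 + (pq-1)l_4 - 1)^3. -/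
lemma red_aux (a1 a2 a3 a4 : ℤ) (h1 : 0 ≤ a1) (h2 : 0 ≤ a2) (h3 : 3 ≤ a3) (h4 : 3 ≤ a4)
    (h12 : 2 ≤ a1 + a2) :
    a1^3 + a2^3 + a3^3 + a4^3 < (a1 + a2 + a3 + a4 - 1)^3 := by
  nlinarith [mul_nonneg h1 h2, mul_nonneg (mul_nonneg h1 h2) (by linarith : (0:ℤ) ≤ a3),
    mul_nonneg h1 (by linarith : (0:ℤ) ≤ a3), mul_nonneg h2 (by linarith : (0:ℤ) ≤ a3),
    mul_nonneg h1 (by linarith : (0:ℤ) ≤ a4), mul_nonneg h2 (by linarith : (0:ℤ) ≤ a4),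
    mul_nonneg (by linarith : (0:ℤ) ≤ a3) (by linarith : (0:ℤ) ≤ a4),
    mul_nonneg (mul_nonneg h1 h2) (by linarith : (0:ℤ) ≤ a4),
    mul_nonneg (mul_nonneg h1 (by linarith : (0:ℤ) ≤ a3)) (by linarith : (0:ℤ) ≤ a4),
    mul_nonneg (mul_nonneg h2 (by linarith : (0:ℤ) ≤ a3)) (by linarith : (0:ℤ) ≤ a4),
    mul_pos (by linarith : (0:ℤ) < a3) (by linarith : (0:ℤ) < a4),
    sq_nonneg (a1 - a2), sq_nonneg (a3 - a4), sq_nonneg (a1+a2-2)]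

lemma term_le_aux (l m : ℤ) (hl : 0 ≤ l) (hm : 0 ≤ m) : l * m^3 ≤ (m * l)^3 := by
  have h : l ≤ l^3 := by
    rcases eq_or_lt_of_le hl with h0 | h1
    · simp [← h0]
    · have h1' : 1 ≤ l := h1
      nlinarith [mul_le_mul h1' h1' (by norm_num) hl]
  calc l * m^3 ≤ l^3 * m^3 := by nlinarith [pow_nonneg hm 3]
    _ = (m*l)^3 := by ring

lemma term_le_aux2 (l m : ℤ) (hl : 0 ≤ l) (hm : 1 ≤ m) : l * (m-1)^3 ≤ (m * l)^3 := by
  have h1 : l * (m-1)^3 ≤ l * m^3 := by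
    apply mul_le_mul_of_nonneg_left _ hl
    apply pow_le_pow_left₀ (by linarith) (by linarith)
  exact le_trans h1 (term_le_aux l m hl (by linarith))

/-- For `p, q ≥ 2` and nonnegative integers `l₁, l₂, l₃, l₄` with `(p-1)l₁ + (q-1)l₂ ≥ 2`,
`(p²-1)l₃ ≥ 3` and `(pq-1)l₄ ≥ 3`,
`l₁(p-2)³ + l₂(q-2)³ + l₃(p²-2)³ + l₄(pq-2)³ < ((p-1)l₁ + (q-1)l₂ + (p²-1)l₃ + (pq-1)l₄ - 1)³`. -/
theorem stmt11 (p q l1 l2 l3 l4 : ℤ) (hp : 2 ≤ p) (hq : 2 ≤ q)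
    (hl1 : 0 ≤ l1) (hl2 : 0 ≤ l2) (hl3 : 0 ≤ l3) (hl4 : 0 ≤ l4)
    (h12 : 2 ≤ (p - 1) * l1 + (q - 1) * l2)
    (h3 : 3 ≤ (p ^ 2 - 1) * l3) (h4 : 3 ≤ (p * q - 1) * l4) :
    l1 * (p - 2) ^ 3 + l2 * (q - 2) ^ 3 + l3 * (p ^ 2 - 2) ^ 3 + l4 * (p * q - 2) ^ 3 <
      ((p - 1) * l1 + (q - 1) * l2 + (p ^ 2 - 1) * l3 + (p * q - 1) * l4 - 1) ^ 3 := by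
  have t1 : l1 * (p - 2) ^ 3 ≤ ((p-1) * l1)^3 := by
    have := term_le_aux2 l1 (p-1) hl1 (by linarith)
    linarith [this]
  have t2 : l2 * (q - 2) ^ 3 ≤ ((q-1) * l2)^3 := by
    have := term_le_aux2 l2 (q-1) hl2 (by linarith)
    linarith [this]
  have hp2 : 1 ≤ p^2 - 1 := by nlinarith
  have hpq : 1 ≤ p*q - 1 := by nlinarith
  have t3 : l3 * (p^2 - 2) ^ 3 ≤ ((p^2-1) * l3)^3 := by
    have := term_le_aux2 l3 (p^2-1) hl3 (by linarith)
    have e : p^2 - 1 - 1 = p^2 - 2 := by ring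
    rw [e] at this; exact this
  have t4 : l4 * (p*q - 2) ^ 3 ≤ ((p*q-1) * l4)^3 := by
    have := term_le_aux2 l4 (p*q-1) hl4 (by linarith)
    have e : p*q - 1 - 1 = p*q - 2 := by ring
    rw [e] at this; exact this
  have key := red_aux ((p-1)*l1) ((q-1)*l2) ((p^2-1)*l3) ((p*q-1)*l4)
    (mul_nonneg (by linarith) hl1) (mul_nonneg (by linarith) hl2) h3 h4 h12
  linarith
end

section
/- For all integers p, q ≥ 2, (p+1)(p^2·q - p·q - 1)^3 < (p^3·q - p·q - 1)^3. -/
/-- For all integers `p, q ≥ 2`, `(p+1)(p²q - pq - 1)³ < (p³q - pq - 1)³`. -/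
theorem stmt12 (p q : ℤ) (hp : 2 ≤ p) (hq : 2 ≤ q) :
    (p + 1) * (p ^ 2 * q - p * q - 1) ^ 3 < (p ^ 3 * q - p * q - 1) ^ 3 := by
  have hpq : 4 ≤ p * q := by nlinarith
  set A := p ^ 2 * q - p * q - 1 with hA
  have hApos : 0 < A := by rw [hA]; nlinarith
  have h1 : p * A ≤ p ^ 3 * q - p * q - 1 := by rw [hA]; nlinarith
  have h2 : (p * A) ^ 3 ≤ (p ^ 3 * q - p * q - 1) ^ 3 :=
    pow_le_pow_left₀ (by positivity) h1 3
  have hA3 : 0 < A ^ 3 := by positivity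
  have hc : 0 < (p ^ 3 - p - 1) * A ^ 3 :=
    mul_pos (by nlinarith) hA3
  have h3 : (p + 1) * A ^ 3 < (p * A) ^ 3 := by nlinarith
  linarith
end

section
/- Let p, q ≥ 2 be integers, t ∈ {p, q}, and suppose (t-1) divides (pq - 1). Then ((pq-1)/(t-1))·(p^2·t - p^2 - 1)^3 < (p^3·q - p^2 - 1)^3. -/
/-- For integers `p, q ≥ 2`, `t ∈ {p, q}` with `(t-1) ∣ (pq - 1)`,
`((pq-1)/(t-1))·(p²t - p² - 1)³ < (p³q - p² - 1)³`. -/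
theorem stmt13 (p q t : ℤ) (hp : 2 ≤ p) (hq : 2 ≤ q)
    (ht : t ∈ ({p, q} : Set ℤ)) (hdvd : (t - 1) ∣ (p * q - 1)) :
    ((p * q - 1) / (t - 1)) * (p ^ 2 * t - p ^ 2 - 1) ^ 3 < (p ^ 3 * q - p ^ 2 - 1) ^ 3 := by
  obtain ⟨k, hk⟩ := hdvd
  have ht2 : 2 ≤ t := by rcases ht with h | h <;> simp_all
  have htlt : t < p * q := by
    rcases ht with h | h <;> subst h <;> nlinarith
  have hk2 : 2 ≤ k := by nlinarith
  have hdiv : (p * q - 1) / (t - 1) = k := by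
    rw [hk]; exact Int.mul_ediv_cancel_left _ (by omega)
  rw [hdiv]
  have ha3 : (3 : ℤ) ≤ p ^ 2 * t - p ^ 2 - 1 := by nlinarith
  have hB : p ^ 3 * q - p ^ 2 - 1 = k * (p ^ 2 * t - p ^ 2 - 1) + (k - 1) := by
    linear_combination p ^ 2 * hk
  rw [hB]
  set a := p ^ 2 * t - p ^ 2 - 1 with haa
  have hk0 : (0:ℤ) < k := by linarith
  have ha0 : (0:ℤ) < a := by linarith
  have key : 0 ≤ a ^ 3 * (k ^ 3 - k) := by
    apply mul_nonneg (by positivity)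
    nlinarith [mul_nonneg (mul_nonneg hk0.le (by linarith : (0:ℤ) ≤ k - 1)) (by linarith : (0:ℤ) ≤ k + 1)]
  have h2 : (k * a) ^ 3 < (k * a + (k - 1)) ^ 3 := by
    apply pow_lt_pow_left₀ (by linarith) (by positivity)
    norm_num
  nlinarith [h2, key]
end

section
/- Let r ≥ 1 and let l_1,...,l_r ≥ 1, and 1 ≤ m_1 < m_2 < ... < m_r be integers with Σ_{i=1}^r l_i·m_i ≥ 3. Then Σ_{i=1}^r l_i(m_i-1)(m_i-2) < (Σ_{i=1}^r l_i·m_i - 1)(Σ_{i=1}^r l_i·m_i - 2), provided r ≥ 2 or l_1 ≥ 2 (i.e., the graph is not a single complete graph). -/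
/-- For `r ≥ 1`, integers `l i ≥ 1` and `1 ≤ m 0 < m 1 < ⋯ < m (r-1)` with
`Σ l i · m i ≥ 3`, provided the configuration is not a single complete graph
(`r ≥ 2` or some `l i ≥ 2`),
`Σ l i (m i - 1)(m i - 2) < (Σ l i · m i - 1)(Σ l i · m i - 2)`. -/
theorem stmt18 (r : ℕ) (hr : 1 ≤ r) (l m : Fin r → ℤ)
    (hl : ∀ i, 1 ≤ l i) (hm : ∀ i, 1 ≤ m i) (hmono : StrictMono m)
    (hsum : 3 ≤ ∑ i, l i * m i)
    (hnot : 2 ≤ r ∨ ∃ i, 2 ≤ l i) :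
    ∑ i, l i * (m i - 1) * (m i - 2) <
      (∑ i, l i * m i - 1) * (∑ i, l i * m i - 2) := by
  set N := ∑ i, l i * m i with hN
  set S := ∑ i, l i with hSdef
  -- S ≥ 2
  have hS : 2 ≤ S := by
    rcases hnot with h2 | ⟨i, hi⟩
    · have h1 : (r : ℤ) ≤ S := by
        have : ∑ _i : Fin r, (1 : ℤ) ≤ ∑ i, l i :=
          Finset.sum_le_sum fun i _ => hl i
        simpa using this
      have : (2 : ℤ) ≤ (r : ℤ) := by exact_mod_cast h2
      linarith
    · have h1 : l i ≤ S :=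
        Finset.single_le_sum (fun j _ => le_trans zero_le_one (hl j))
          (Finset.mem_univ i)
      linarith
  -- each m i + 1 ≤ N
  have hNm : ∀ i, m i + 1 ≤ N := by
    intro i
    have h1 : ∑ j, (m j + l j - 1) ≤ N := by
      apply Finset.sum_le_sum
      intro j _
      nlinarith [hl j, hm j]
    have h2 : m i + ((r : ℤ) - 1) ≤ ∑ j, m j := by
      rw [← Finset.add_sum_erase _ m (Finset.mem_univ i)]
      have h3 : ∑ _j ∈ Finset.univ.erase i, (1 : ℤ) ≤
          ∑ j ∈ Finset.univ.erase i, m j :=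
        Finset.sum_le_sum fun j _ => hm j
      have h4 : ((Finset.univ.erase i).card : ℤ) = (r : ℤ) - 1 := by
        rw [Finset.card_erase_of_mem (Finset.mem_univ i)]
        simp
        omega
      simp only [Finset.sum_const, nsmul_eq_mul, mul_one] at h3
      rw [h4] at h3
      linarith
    have h5 : ∑ j, (m j + l j - 1) = (∑ j, m j) + S - (r : ℤ) := by
      rw [Finset.sum_sub_distrib, Finset.sum_add_distrib]
      simp [hSdef]
    linarith
  -- termwise bound
  have key : ∑ i, l i * (m i - 1) * (m i - 2) ≤
      ∑ i, (N - 3) * (l i * (m i - 1)) := by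
    apply Finset.sum_le_sum
    intro i _
    have h1 := hNm i
    have h2 := hm i
    have h3 := hl i
    have h4 : (0:ℤ) ≤ l i * (m i - 1) := by nlinarith
    nlinarith [mul_nonneg (by linarith : (0:ℤ) ≤ N - 1 - m i) h4]
  have hsplit : ∑ i, l i * (m i - 1) = N - S := by
    simp only [mul_sub, mul_one, Finset.sum_sub_distrib, hN, hSdef]
  have h6 : ∑ i, (N - 3) * (l i * (m i - 1)) = (N - 3) * (N - S) := by
    rw [← Finset.mul_sum, hsplit]
  have h7 : (N - 3) * (N - S) < (N - 1) * (N - 2) := by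
    nlinarith [hsum, hS]
  calc ∑ i, l i * (m i - 1) * (m i - 2)
      ≤ (N - 3) * (N - S) := by rw [← h6]; exact key
    _ < (N - 1) * (N - 2) := h7
end
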